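/- Let (V, Ω) be a symplectic vector space of dimension 2n (n ≥ 1), let r be a symmetric bilinear form on V, let ρ ∈ End(V) be defined by Ω(X, ρY) = r(X,Y), and define E(X,Y)Z = (1/(2n+2))(2Ω(X,Y)ρZ + Ω(X,Z)ρY − Ω(Y,Z)ρX + Ω(X,ρZ)Y − Ω(Y,ρZ)X). Then the Ricci tensor of E equals r, i.e. Tr(Z ↦ E(X,Z)Y) = r(X,Y) for all X, Y ∈ V. (Consequently, for any algebraic symplectic curvature tensor R with Ricci tensor r, the tensor W := R − E has vanishing Ricci trace; this is the normalization underlying the decomposition R = E + W of symplectic curvature tensors into Ricci part and Weyl part.) -/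

import Mathlib

open TensorProduct

lemma trace_smulRight' {V : Type*} [AddCommGroup V] [Module ℝ V] [FiniteDimensional ℝ V]
    (f : V →ₗ[ℝ] ℝ) (x : V) : LinearMap.trace ℝ V (f.smulRight x) = f x := by
  have h : f.smulRight x = dualTensorHom ℝ V V (f ⊗ₜ x) := by ext z; simp
  rw [h, LinearMap.trace_eq_contract_apply, contractLeft_apply]

lemma trace_rho_zero {V : Type*} [AddCommGroup V] [Module ℝ V] [FiniteDimensional ℝ V]
    (Ω : V →ₗ[ℝ] V →ₗ[ℝ] ℝ)
    (hΩalt : ∀ v : V, Ω v v = 0)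
    (hΩnd : ∀ u : V, (∀ v : V, Ω u v = 0) → u = 0)
    (r : V →ₗ[ℝ] V →ₗ[ℝ] ℝ) (hr : ∀ X Y : V, r X Y = r Y X)
    (ρ : V →ₗ[ℝ] V) (hρ : ∀ X Y : V, Ω X (ρ Y) = r X Y) :
    LinearMap.trace ℝ V ρ = 0 := by
  have hskew : ∀ u v : V, Ω u v = -Ω v u := by
    intro u v
    have h := hΩalt (u + v)
    simp only [map_add, LinearMap.add_apply, hΩalt] at h
    linarith
  have hnd : LinearMap.BilinForm.Nondegenerate (Ω : LinearMap.BilinForm ℝ V) :=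
    ⟨hΩnd, fun y hy => hΩnd y (fun x => by rw [hskew]; simp [hy x])⟩
  set e := LinearMap.BilinForm.toDual (Ω : LinearMap.BilinForm ℝ V) hnd with he
  have hconj : e.symm.conj (Module.Dual.transpose (R := ℝ) ρ) = -ρ := by
    apply LinearMap.ext
    intro x
    rw [LinearEquiv.conj_apply]
    simp only [LinearMap.coe_comp, LinearEquiv.coe_coe, Function.comp_apply,
      LinearMap.neg_apply]
    rw [LinearEquiv.symm_apply_eq]
    apply LinearMap.ext
    intro y
    have hL : Module.Dual.transpose (R := ℝ) ρ (e x) y = Ω x (ρ y) := rfl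
    have hR : e (-ρ x) y = -Ω (ρ x) y := by
      simp [he, LinearMap.BilinForm.toDual_def]
    rw [LinearEquiv.symm_symm, hL, hR, hρ, hr, ← hρ, hskew y (ρ x)]
  have h1 : LinearMap.trace ℝ V (e.symm.conj (Module.Dual.transpose (R := ℝ) ρ))
      = LinearMap.trace ℝ V ρ := by
    rw [LinearMap.trace_conj', LinearMap.trace_transpose']
  rw [hconj] at h1
  simp only [map_neg] at h1
  linarith

/-- the Ricci tensor of the Ricci-type tensor `E` built from the
symmetric bilinear form `r` equals `r`:  `Tr(Z ↦ E(X,Z)Y) = r(X,Y)`. -/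
theorem ricci_type_tensor_ricci_trace
    {V : Type*} [AddCommGroup V] [Module ℝ V] [FiniteDimensional ℝ V]
    (n : ℕ) (hn : 1 ≤ n) (hdim : Module.finrank ℝ V = 2 * n)
    (Ω : V →ₗ[ℝ] V →ₗ[ℝ] ℝ)
    (hΩalt : ∀ v : V, Ω v v = 0)
    (hΩnd : ∀ u : V, (∀ v : V, Ω u v = 0) → u = 0)
    (r : V →ₗ[ℝ] V →ₗ[ℝ] ℝ) (hr : ∀ X Y : V, r X Y = r Y X)
    (ρ : V →ₗ[ℝ] V) (hρ : ∀ X Y : V, Ω X (ρ Y) = r X Y)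
    (E : V →ₗ[ℝ] V →ₗ[ℝ] V →ₗ[ℝ] V)
    (hE : ∀ X Y Z : V, E X Y Z =
      (2 * (n : ℝ) + 2)⁻¹ •
        ((2 * Ω X Y) • ρ Z + (Ω X Z) • ρ Y - (Ω Y Z) • ρ X
          + (Ω X (ρ Z)) • Y - (Ω Y (ρ Z)) • X)) :
    ∀ X Y : V, LinearMap.trace ℝ V ((E X).flip Y) = r X Y := by
  intro X Y
  have hskew : ∀ u v : V, Ω u v = -Ω v u := by
    intro u v
    have h := hΩalt (u + v)
    simp only [map_add, LinearMap.add_apply, hΩalt] at h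
    linarith
  have htr := trace_rho_zero Ω hΩalt hΩnd r hr ρ hρ
  have key : (E X).flip Y =
      (2 * (n : ℝ) + 2)⁻¹ •
        ((2 : ℝ) • ((Ω X).smulRight (ρ Y)) + (Ω X Y) • ρ
          - ((Ω.flip Y).smulRight (ρ X)) + (Ω X (ρ Y)) • (LinearMap.id : V →ₗ[ℝ] V)
          - ((Ω.flip (ρ Y)).smulRight X)) := by
    ext Z
    simp only [LinearMap.flip_apply, LinearMap.smul_apply, LinearMap.add_apply,
      LinearMap.sub_apply, LinearMap.smulRight_apply, LinearMap.id_apply, hE X Z Y]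
    module
  rw [key]
  simp only [map_smul, map_add, map_sub, LinearMap.map_smul, trace_smulRight',
    LinearMap.trace_id, htr, hdim, hρ]
  have hne : 2 * (n : ℝ) + 2 ≠ 0 := by positivity
  have hρX : Ω (ρ X) Y = -r X Y := by rw [hskew, hρ, hr]
  simp only [LinearMap.flip_apply, hρX, hρ]
  push_cast
  field_simp
  have hne2 : (2 + (n:ℝ) * 2) ≠ 0 := by positivity
  calc _ = (r X Y) * (((n:ℝ) * 2 + 2) * (2 + (n:ℝ) * 2)⁻¹) := by ring
    _ = r X Y := by rw [show ((n:ℝ) * 2 + 2) = 2 + n * 2 by ring, mul_inv_cancel₀ hne2, mul_one]
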